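/- arXiv:2406.16190 — 3 statements merged into one kernel-verified Lean document; each statement's English description precedes it below -/
import Mathlib

section
/- Let k be a positive integer, let A, C be complex k×k matrices, and let z be a nonzero real number such that A + i z C is invertible. Then for all vectors u, w ∈ ℂ^k, the condition A u + C w = 0 holds if and only if i (σ(z) − I) u − (1/z) (I + σ(z)) w = 0, where σ(z) := −(A + i z C)⁻¹ (A − i z C) and I is the k×k identity matrix. -/
open Matrix

/-- `σ(z) := −(A + i z C)⁻¹ (A − i z C)`. -/
noncomputable def sigma {k : ℕ} (A C : Matrix (Fin k) (Fin k) ℂ) (z : ℝ) :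
    Matrix (Fin k) (Fin k) ℂ :=
  -((A + (Complex.I * (z : ℂ)) • C)⁻¹ * (A - (Complex.I * (z : ℂ)) • C))

/-! With `M = A + s C`, the two coefficient matrices of the `σ`-form factor through `M⁻¹`:
`σ - 1 = -2 M⁻¹ A` and `1 + σ = 2 s M⁻¹ C`. For `s = i z` the `σ`-form is therefore
`-2 i M⁻¹ (A u + C w) = 0`, which is equivalent to `A u + C w = 0` because `M` is invertible. -/

namespace Matrix

variable {n R : Type*} [Fintype n] [DecidableEq n] [CommRing R]
  (A C : Matrix n n R) (s : R)

theorem neg_inv_mul_sub_smul_sub_one (hM : IsUnit (A + s • C)) :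
    -((A + s • C)⁻¹ * (A - s • C)) - 1 = (-2 : R) • ((A + s • C)⁻¹ * A) := by
  have hdet := (isUnit_iff_isUnit_det _).mp hM
  have hsplit : A - s • C = (2 : R) • A - (A + s • C) := by module
  rw [hsplit, Matrix.mul_sub, nonsing_inv_mul _ hdet, Matrix.mul_smul]
  module

theorem one_add_neg_inv_mul_sub_smul (hM : IsUnit (A + s • C)) :
    1 + -((A + s • C)⁻¹ * (A - s • C)) = (2 * s) • ((A + s • C)⁻¹ * C) := by
  have hdet := (isUnit_iff_isUnit_det _).mp hM
  have hsplit : A - s • C = (A + s • C) - (2 * s) • C := by module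
  rw [hsplit, Matrix.mul_sub, nonsing_inv_mul _ hdet, Matrix.mul_smul]
  module

theorem smul_neg_inv_mul_sub_smul_mulVec_sub {a b : R} (hab : b * s = a)
    (hM : IsUnit (A + s • C)) (u w : n → R) :
    (a • (-((A + s • C)⁻¹ * (A - s • C)) - 1)) *ᵥ u
        - (b • (1 + -((A + s • C)⁻¹ * (A - s • C)))) *ᵥ w
      = (-2 * a) • ((A + s • C)⁻¹ *ᵥ (A *ᵥ u + C *ᵥ w)) := by
  rw [neg_inv_mul_sub_smul_sub_one A C s hM, one_add_neg_inv_mul_sub_smul A C s hM,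
    smul_smul, smul_smul, mul_left_comm b, hab, smul_mulVec, smul_mulVec,
    ← mulVec_mulVec, ← mulVec_mulVec, mulVec_add]
  module

end Matrix

theorem binding_condition_sigma_form_general (k : ℕ)
    (A C : Matrix (Fin k) (Fin k) ℂ) (z : ℝ) (hz : z ≠ 0)
    (hinv : IsUnit (A + (Complex.I * (z : ℂ)) • C)) :
    ∀ u w : Fin k → ℂ,
      A *ᵥ u + C *ᵥ w = 0 ↔
        (Complex.I • (sigma A C z - 1)) *ᵥ u -
          ((1 / (z : ℂ)) • (1 + sigma A C z)) *ᵥ w = 0 := by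
  intro u w
  have hcoef : 1 / (z : ℂ) * (Complex.I * z) = Complex.I := by
    field_simp [Complex.ofReal_ne_zero.mpr hz]
  have hinj := mulVec_injective_iff_isUnit.mpr (isUnit_nonsing_inv_iff.mpr hinv)
  rw [sigma, smul_neg_inv_mul_sub_smul_mulVec_sub A C _ hcoef hinv,
    smul_eq_zero_iff_right (by simp), hinj.eq_iff' (mulVec_zero _)]

/-- The binding condition `A u + C w = 0` is equivalent to its `σ(z)`-form
`i (σ(z) − I) u − (1/z)(I + σ(z)) w = 0`. -/
theorem binding_condition_sigma_form (k : ℕ) (hk : 0 < k)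
    (A C : Matrix (Fin k) (Fin k) ℂ) (z : ℝ) (hz : z ≠ 0)
    (hinv : IsUnit (A + (Complex.I * (z : ℂ)) • C)) :
    ∀ u w : Fin k → ℂ,
      A *ᵥ u + C *ᵥ w = 0 ↔
        (Complex.I • (sigma A C z - 1)) *ᵥ u -
          ((1 / (z : ℂ)) • (1 + sigma A C z)) *ᵥ w = 0 :=
  binding_condition_sigma_form_general k A C z hz hinv
end

section
/- Let k be a positive integer and let 𝒰, 𝒱 be unitary k×k complex matrices such that for all u, w ∈ ℂ^k, the condition i (𝒰 − I) u + (𝒰 + I) w = 0 holds if and only if i (𝒱 − I) u + (𝒱 + I) w = 0, where I is the k×k identity matrix. Then 𝒰 = 𝒱. -/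
open Matrix

/- For any matrix `U`, the pairs `((U + 1) x, -i (U - 1) x)` satisfy the binding condition of `U`,
because `U - 1` and `U + 1` commute. Fed into the binding condition of `V` they give
`2i (V - U) x`, so equal sets of admissible pairs force `V = U`. -/

section BindingForm

variable {R n : Type*} [CommRing R] [Fintype n] [DecidableEq n]

/-- The binding condition of `U` reads `bindingForm Complex.I U u w = 0`. -/
def bindingForm (c : R) (U : Matrix n n R) (u w : n → R) : n → R :=
  (c • (U - 1)) *ᵥ u + (U + 1) *ᵥ w

theorem bindingForm_add_one_mulVec_sub_one_mulVec (c : R) (U V : Matrix n n R) (x : n → R) :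
    bindingForm c V ((U + 1) *ᵥ x) ((-c • (U - 1)) *ᵥ x) = (2 * c) • (V *ᵥ x - U *ᵥ x) := by
  have hmat : (c • (V - 1)) * (U + 1) + (V + 1) * (-c • (U - 1)) = (2 * c) • (V - U) := by
    rw [Matrix.smul_mul, Matrix.mul_smul, neg_smul, ← sub_eq_add_neg, ← smul_sub,
      mul_comm, ← smul_smul, ofNat_smul_eq_nsmul R 2]
    congr 1
    noncomm_ring
  rw [bindingForm, mulVec_mulVec, mulVec_mulVec, ← add_mulVec, hmat, smul_mulVec, sub_mulVec]

theorem bindingForm_self_add_one_mulVec_sub_one_mulVec (c : R) (U : Matrix n n R) (x : n → R) :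
    bindingForm c U ((U + 1) *ᵥ x) ((-c • (U - 1)) *ᵥ x) = 0 := by
  rw [bindingForm_add_one_mulVec_sub_one_mulVec, sub_self, smul_zero]

end BindingForm

theorem unitary_binding_condition_unique_general (k : ℕ)
    (U V : Matrix (Fin k) (Fin k) ℂ)
    (hsame : ∀ u w : Fin k → ℂ,
      (Complex.I • (U - 1)) *ᵥ u + (U + 1) *ᵥ w = 0 ↔
        (Complex.I • (V - 1)) *ᵥ u + (V + 1) *ᵥ w = 0) :
    U = V := by
  refine ext_iff_mulVec.mpr fun x => ?_
  have hV : bindingForm Complex.I V ((U + 1) *ᵥ x) ((-Complex.I • (U - 1)) *ᵥ x) = 0 :=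
    (hsame _ _).mp (bindingForm_self_add_one_mulVec_sub_one_mulVec _ U x)
  rw [bindingForm_add_one_mulVec_sub_one_mulVec, smul_eq_zero, sub_eq_zero] at hV
  exact (hV.resolve_left (by simp)).symm

/-- Theorem 4.4: the unitary matrix in the canonical form of the binding condition is
uniquely determined: if unitary `𝒰`, `𝒱` define the same set of boundary-value pairs,
then `𝒰 = 𝒱`. -/
theorem unitary_binding_condition_unique (k : ℕ) (hk : 0 < k)
    (U V : Matrix (Fin k) (Fin k) ℂ)
    (hU : U ∈ Matrix.unitaryGroup (Fin k) ℂ)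
    (hV : V ∈ Matrix.unitaryGroup (Fin k) ℂ)
    (hsame : ∀ u w : Fin k → ℂ,
      (Complex.I • (U - 1)) *ᵥ u + (U + 1) *ᵥ w = 0 ↔
        (Complex.I • (V - 1)) *ᵥ u + (V + 1) *ᵥ w = 0) :
    U = V :=
  unitary_binding_condition_unique_general k U V hsame
end

section
/- Let k be a positive integer, let 𝒰, 𝒱 be unitary k×k complex matrices such that for all u, w ∈ ℂ^k, i (𝒰 − I) u + (𝒰 + I) w = 0 holds if and only if i (𝒱 − I) u + (𝒱 + I) w = 0 (I the k×k identity matrix). If u ∈ ℂ^k and λ ∈ ℂ satisfy 𝒰 u = λ u, then 𝒱 u = λ u. -/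
open Matrix

/- On the pair `((λ + 1) u, -i (λ - 1) u)` the binding condition of any matrix `A` evaluates to
`2 i (A u - λ u)`, so the pair satisfies it exactly when `u` is a `λ`-eigenvector of `A`;
the hypothesis transports this from `U` to `V`. -/

section

variable {n : Type*} [Fintype n] [DecidableEq n]

theorem binding_condition_eigen_pair (A : Matrix n n ℂ) (u : n → ℂ) (lam : ℂ) :
    (Complex.I • (A - 1)) *ᵥ ((lam + 1) • u) + (A + 1) *ᵥ ((-Complex.I * (lam - 1)) • u) =
      (2 * Complex.I) • (A *ᵥ u - lam • u) := by
  simp only [smul_mulVec, mulVec_smul, sub_mulVec, add_mulVec, one_mulVec]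
  module

theorem binding_condition_eigen_pair_eq_zero_iff (A : Matrix n n ℂ) (u : n → ℂ) (lam : ℂ) :
    (Complex.I • (A - 1)) *ᵥ ((lam + 1) • u) + (A + 1) *ᵥ ((-Complex.I * (lam - 1)) • u) = 0 ↔
      A *ᵥ u = lam • u := by
  rw [binding_condition_eigen_pair, smul_eq_zero, sub_eq_zero]
  simp [Complex.I_ne_zero]

end

theorem eigenvector_transfer_general (k : ℕ)
    (U V : Matrix (Fin k) (Fin k) ℂ)
    (hsame : ∀ u w : Fin k → ℂ,
      (Complex.I • (U - 1)) *ᵥ u + (U + 1) *ᵥ w = 0 ↔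
        (Complex.I • (V - 1)) *ᵥ u + (V + 1) *ᵥ w = 0)
    (u : Fin k → ℂ) (lam : ℂ) (hu : U *ᵥ u = lam • u) :
    V *ᵥ u = lam • u :=
  (binding_condition_eigen_pair_eq_zero_iff V u lam).mp <|
    (hsame _ _).mp <| (binding_condition_eigen_pair_eq_zero_iff U u lam).mpr hu

/-- Eigenvector transfer step in the proof of Theorem 4.4: if unitary `𝒰`, `𝒱` define the
same binding condition and `𝒰 u = λ u`, then `𝒱 u = λ u`. -/
theorem eigenvector_transfer (k : ℕ) (hk : 0 < k)
    (U V : Matrix (Fin k) (Fin k) ℂ)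
    (hU : U ∈ Matrix.unitaryGroup (Fin k) ℂ)
    (hV : V ∈ Matrix.unitaryGroup (Fin k) ℂ)
    (hsame : ∀ u w : Fin k → ℂ,
      (Complex.I • (U - 1)) *ᵥ u + (U + 1) *ᵥ w = 0 ↔
        (Complex.I • (V - 1)) *ᵥ u + (V + 1) *ᵥ w = 0)
    (u : Fin k → ℂ) (lam : ℂ) (hu : U *ᵥ u = lam • u) :
    V *ᵥ u = lam • u :=
  eigenvector_transfer_general k U V hsame u lam hu
end
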